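/- Let f : ℝⁿ → ℝᵐ be an asymptotically affine function. For every ε > 0 there exist a compact set K ⊂ ℝⁿ, a positive integer N = N(f, K, ε), and a radial neural network whose hidden layers all use the Step-ReLU activation, with N hidden layers of widths (n+1, n+2, …, n+N) (input width n, output width m), such that its feedforward function F : ℝⁿ → ℝᵐ satisfies |F(x) − f(x)| < ε for all x ∈ ℝⁿ. -/

import Mathlib

open scoped Classical
open Metric Set

noncomputable section

abbrev Euc (n : ℕ) := EuclideanSpace ℝ (Fin n)

def mulVecE {m n : ℕ} (W : Matrix (Fin m) (Fin n) ℝ) (v : Euc n) : Euc m :=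
  WithLp.toLp 2 (fun j => ∑ k, W j k * v k)

/-- Step-ReLU on ℝⁿ: the radial rescaling function sending v to v if ‖v‖ ≥ 1
and to 0 if ‖v‖ < 1. -/
def stepReLU {n : ℕ} (v : Euc n) : Euc n := if 1 ≤ ‖v‖ then v else 0

/-- N witnesses the covering property for f on K at scale ε: there are points
c₁, …, c_N ∈ K and radii r₁, …, r_N ∈ (0,1) such that the balls B_{rᵢ}(cᵢ)
cover K and f(B_{rᵢ}(cᵢ) ∩ K) ⊆ B_ε(f cᵢ) for all i. -/
def IsCoverSize {n m : ℕ} (f : Euc n → Euc m) (K : Set (Euc n)) (ε : ℝ) (N : ℕ) : Prop :=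
  ∃ (c : Fin N → Euc n) (r : Fin N → ℝ),
    (∀ i, c i ∈ K) ∧ (∀ i, r i ∈ Set.Ioo (0:ℝ) 1) ∧
    (K ⊆ ⋃ i, Metric.ball (c i) (r i)) ∧
    (∀ i, f '' (Metric.ball (c i) (r i) ∩ K) ⊆ Metric.ball (f (c i)) ε)

/-- N(f, K, ε): the minimal N as in IsCoverSize. -/
def coverNum {n m : ℕ} (f : Euc n → Euc m) (K : Set (Euc n)) (ε : ℝ) : ℕ :=
  sInf {N | IsCoverSize f K ε N}

/-- A continuous f : ℝⁿ → ℝᵐ is asymptotically affine if there is an affine map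
L(x) = A x + b₀ such that for every ε > 0 there is a compact K with
‖L x − f x‖ < ε for all x outside K. -/
def IsAsymptoticallyAffine {n m : ℕ} (f : Euc n → Euc m) : Prop :=
  Continuous f ∧
    ∃ (A : Matrix (Fin m) (Fin n) ℝ) (b₀ : Euc m),
      ∀ ε > (0:ℝ), ∃ K : Set (Euc n), IsCompact K ∧
        ∀ x ∉ K, ‖(mulVecE A x + b₀) - f x‖ < ε

/-- The partial feedforward functions of a radial neural network with input width n,
hidden widths (n+1, n+2, …), Step-ReLU activations at every hidden layer, weights W and
biases b: after i hidden layers the output lies in ℝ^{n+i}. -/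
def hiddenFF (n : ℕ) (W : ∀ i : ℕ, Matrix (Fin (n + i + 1)) (Fin (n + i)) ℝ)
    (b : ∀ i : ℕ, Euc (n + i + 1)) : (i : ℕ) → Euc n → Euc (n + i)
  | 0 => fun x => x
  | (i+1) => fun x => stepReLU (mulVecE (W i) (hiddenFF n W b i x) + b i)

/-!
Take a minimal cover of a large closed ball `K` by balls `B(cᵢ, rᵢ)` and shrink each one to a ball
`B(γᵢ, ρᵢ) ⊆ B(cᵢ, rᵢ) ∩ K`; the shrunken balls still cover the part of `K` far from its boundary,
which contains the compact set off which `f` is `ε`-close to its affine asymptote `L`. Hidden layer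
`i` tests the `i`-th ball: as long as `x` has escaped all balls so far, the hidden state is
`(4/(5ρᵢ))(x - γᵢ)` followed by `3/5` and zeros, whose norm is `< 1` exactly on `B(γᵢ, ρᵢ)`, where
Step-ReLU kills it. Every later layer turns a killed state into a `0/1` vector of norm `≥ 1`
recording when it was killed, which Step-ReLU lets through. The output layer sends a surviving state
to `L x` and a state killed by the `q`-th ball to `f c_q`.
-/

open Finset

section
variable {n : ℕ}

-- Hidden states of every width are handled as sequences `ℕ → ℝ`; `ofSeq p` keeps the first `p`.
def ofSeq (p : ℕ) (V : ℕ → ℝ) : Euc p := WithLp.toLp 2 fun k => V k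

def toSeq (x : Euc n) (k : ℕ) : ℝ := if h : k < n then x ⟨k, h⟩ else 0

lemma ofSeq_toSeq (x : Euc n) : ofSeq n (toSeq x) = x := by
  ext k
  simp [ofSeq, toSeq]

lemma toSeq_sub (x y : Euc n) : toSeq (x - y) = toSeq x - toSeq y := by
  funext k
  by_cases h : k < n <;> simp [toSeq, h]

lemma norm_ofSeq_sq (p : ℕ) (V : ℕ → ℝ) : ‖ofSeq p V‖ ^ 2 = ∑ k ∈ range p, V k ^ 2 := by
  simp [EuclideanSpace.norm_sq_eq, ofSeq, Fin.sum_univ_eq_sum_range (fun k => V k ^ 2)]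

def ofKernel {ι : Type*} (p : ℕ) (M : ι → ℕ → ℝ) : Matrix ι (Fin p) ℝ := Matrix.of fun j k => M j k

lemma mulVecE_ofKernel {m p : ℕ} (M : Fin m → ℕ → ℝ) (V : ℕ → ℝ) :
    mulVecE (ofKernel p M) (ofSeq p V) =
      WithLp.toLp 2 fun j => ∑ k ∈ range p, M j k * V k := by
  ext j
  simp [mulVecE, ofKernel, ofSeq, Fin.sum_univ_eq_sum_range (fun k => M j k * V k)]

/-- The affine map of hidden layer `i` on sequences. Layer `i + 1` moves the centre of the first
`n` coordinates from `γ i` to `γ (i + 1)` by means of the constant coordinate `n`, copies the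
others, and appends `1 - 5/3 ·` (coordinate `n`), which is `0` on live states and `1` on dead
ones. -/
def layerMap (ρ : ℕ → ℝ) (γ : ℕ → Euc n) : ℕ → (ℕ → ℝ) → ℕ → ℝ
  | 0, V, j =>
    if j < n then 4 / (5 * ρ 0) * (V j - toSeq (γ 0) j) else if j = n then 3 / 5 else 0
  | i + 1, V, j =>
    if j < n then ρ i / ρ (i + 1) * V j + 4 / (3 * ρ (i + 1)) * toSeq (γ i - γ (i + 1)) j * V n
    else if j < n + i + 1 then V j else 1 - 5 / 3 * V n

def hiddenWeight (ρ : ℕ → ℝ) (γ : ℕ → Euc n) (i : ℕ) : Matrix (Fin (n + i + 1)) (Fin (n + i)) ℝ :=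
  ofKernel _ fun j k => layerMap ρ γ i (Pi.single k 1) j - layerMap ρ γ i 0 j

def hiddenBias (ρ : ℕ → ℝ) (γ : ℕ → Euc n) (i : ℕ) : Euc (n + i + 1) :=
  ofSeq _ (layerMap ρ γ i 0)

lemma hiddenWeight_mulVecE_add (ρ : ℕ → ℝ) (γ : ℕ → Euc n) (i : ℕ) (V : ℕ → ℝ) :
    mulVecE (hiddenWeight ρ γ i) (ofSeq (n + i) V) + hiddenBias ρ γ i =
      ofSeq _ (layerMap ρ γ i V) := by
  rw [hiddenWeight, mulVecE_ofKernel]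
  ext j
  have hj := j.2
  simp only [hiddenBias, ofSeq, PiLp.add_apply]
  cases i with
  | zero =>
    simp only [layerMap]
    split_ifs
    · simp only [add_zero, Pi.single_apply, mul_sub, mul_ite, mul_one, mul_zero, Pi.zero_apply,
        zero_sub, mul_neg, sub_neg_eq_add, sub_add_cancel, ite_mul, zero_mul, sum_ite_eq,
        Finset.mem_range, ↓reduceIte, *]
      ring
    all_goals simp
  | succ i =>
    simp only [layerMap]
    split_ifs
    · simp [Pi.single_apply, add_mul, sum_add_distrib, sum_ite_eq,
        show (j : ℕ) < n + (i + 1) by omega]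
    · simp [Pi.single_apply, sum_ite_eq, show (j : ℕ) < n + (i + 1) by omega]
    · simp only [Pi.single_apply, mul_ite, mul_one, mul_zero, Pi.zero_apply, sub_zero,
        sub_sub_cancel_left, neg_mul, ite_mul, zero_mul, sum_neg_distrib, sum_ite_eq,
        Finset.mem_range, lt_add_iff_pos_right, Order.lt_add_one_iff, zero_le, ↓reduceIte]
      ring

/-- `liveState (ρ i) (γ i) x` is the state after layer `i` of an input that no ball `≤ i` has
caught, and `deadState n q` that of an input caught first by ball `q`. Since
`(4/5)² + (3/5)² = 1`, Step-ReLU kills a live state exactly when `‖x - g‖ < ρ`. -/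
def liveState (ρ : ℝ) (g x : Euc n) (k : ℕ) : ℝ :=
  if k < n then 4 / (5 * ρ) * toSeq (x - g) k else if k = n then 3 / 5 else 0

def deadState (n q : ℕ) (k : ℕ) : ℝ := if n + q < k then 1 else 0

section layers
variable (ρ : ℕ → ℝ) (γ : ℕ → Euc n)

lemma layerMap_zero_toSeq (x : Euc n) :
    layerMap ρ γ 0 (toSeq x) = liveState (ρ 0) (γ 0) x := by
  funext j
  simp only [layerMap, liveState, toSeq_sub, Pi.sub_apply]

lemma layerMap_succ_liveState {i : ℕ} (hρ : ρ i ≠ 0) (x : Euc n) :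
    layerMap ρ γ (i + 1) (liveState (ρ i) (γ i) x) = liveState (ρ (i + 1)) (γ (i + 1)) x := by
  funext j
  simp only [layerMap, liveState, toSeq_sub, Pi.sub_apply]
  split_ifs <;> first | omega | rfl | norm_num; done |
    linear_combination 4 / 5 / ρ (i + 1) * (toSeq x j - toSeq (γ i) j) * mul_inv_cancel₀ hρ

lemma layerMap_succ_deadState {i q : ℕ} (hq : q ≤ i) :
    layerMap ρ γ (i + 1) (deadState n q) = deadState n q := by
  funext j
  simp only [layerMap, deadState]
  split_ifs <;> first | omega | norm_num

end layers

lemma norm_ofSeq_liveState_sq {p : ℕ} (hp : n < p) (ρ : ℝ) (g x : Euc n) :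
    ‖ofSeq p (liveState ρ g x)‖ ^ 2 = (4 / (5 * ρ)) ^ 2 * ‖x - g‖ ^ 2 + (3 / 5) ^ 2 := by
  obtain ⟨d, rfl⟩ : ∃ d, p = n + (d + 1) := ⟨p - n - 1, by omega⟩
  have hfirst :
      ∀ k ∈ range n, liveState ρ g x k ^ 2 = (4 / (5 * ρ)) ^ 2 * toSeq (x - g) k ^ 2 :=
    fun k hk => by simp [liveState, mem_range.1 hk, mul_pow]
  rw [norm_ofSeq_sq, sum_range_add, sum_range_succ', sum_congr rfl hfirst, ← mul_sum,
    ← norm_ofSeq_sq, ofSeq_toSeq]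
  simp [liveState]

lemma norm_ofSeq_liveState_lt_one_iff {p : ℕ} (hp : n < p) {ρ : ℝ} (hρ : 0 < ρ) (g x : Euc n) :
    ‖ofSeq p (liveState ρ g x)‖ < 1 ↔ ‖x - g‖ < ρ := by
  have : (4 / (5 * ρ)) ^ 2 * ‖x - g‖ ^ 2 = 16 / 25 * (‖x - g‖ / ρ) ^ 2 := by
    field_simp
    ring
  have ht : 0 ≤ ‖x - g‖ / ρ := by positivity
  rw [← sq_lt_one_iff₀ (norm_nonneg _), norm_ofSeq_liveState_sq hp, this, ← div_lt_one hρ]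
  constructor <;> intro <;> nlinarith

lemma ofSeq_deadState_of_le {p q : ℕ} (h : p ≤ n + q + 1) : ofSeq p (deadState n q) = 0 := by
  ext k
  simp [ofSeq, deadState, show ¬ n + q < k by omega]

lemma one_le_norm_ofSeq_deadState {p q : ℕ} (h : n + q + 1 < p) :
    1 ≤ ‖ofSeq p (deadState n q)‖ := by
  rw [← one_le_sq_iff₀ (norm_nonneg _), norm_ofSeq_sq]
  calc (1 : ℝ) = deadState n q (n + q + 1) ^ 2 := by simp [deadState]
    _ ≤ _ := single_le_sum (fun k _ => sq_nonneg (deadState n q k)) (mem_range.2 h)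

lemma stepReLU_ofSeq_liveState {p : ℕ} (hp : n < p) {ρ : ℝ} (hρ : 0 < ρ) (g x : Euc n) :
    (ρ ≤ ‖x - g‖ ∧ stepReLU (ofSeq p (liveState ρ g x)) = ofSeq p (liveState ρ g x)) ∨
      (‖x - g‖ < ρ ∧ stepReLU (ofSeq p (liveState ρ g x)) = 0) := by
  have h := norm_ofSeq_liveState_lt_one_iff hp hρ g x
  by_cases hx : ‖x - g‖ < ρ
  · exact Or.inr ⟨hx, if_neg (not_le.2 (h.2 hx))⟩
  · exact Or.inl ⟨not_lt.1 hx, if_pos (not_lt.1 (mt h.1 hx))⟩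

lemma stepReLU_ofSeq_deadState {p q : ℕ} (h : n + q + 1 < p) :
    stepReLU (ofSeq p (deadState n q)) = ofSeq p (deadState n q) :=
  if_pos (one_le_norm_ofSeq_deadState h)

lemma hiddenFF_succ (W : ∀ i : ℕ, Matrix (Fin (n + i + 1)) (Fin (n + i)) ℝ)
    (b : ∀ i : ℕ, Euc (n + i + 1)) (i : ℕ) (x : Euc n) :
    hiddenFF n W b (i + 1) x = stepReLU (mulVecE (W i) (hiddenFF n W b i x) + b i) :=
  rfl

section network
variable {ρ : ℕ → ℝ} {γ : ℕ → Euc n}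

lemma hiddenFF_one (x : Euc n) :
    hiddenFF n (hiddenWeight ρ γ) (hiddenBias ρ γ) 1 x =
      stepReLU (ofSeq (n + 1) (liveState (ρ 0) (γ 0) x)) := by
  have hx : hiddenFF n (hiddenWeight ρ γ) (hiddenBias ρ γ) 0 x = ofSeq (n + 0) (toSeq x) :=
    (ofSeq_toSeq x).symm
  rw [hiddenFF_succ, hx, hiddenWeight_mulVecE_add, layerMap_zero_toSeq]

lemma hiddenFF_succ_liveState {i : ℕ} (hρ : ρ i ≠ 0) {x : Euc n}
    (hx : hiddenFF n (hiddenWeight ρ γ) (hiddenBias ρ γ) (i + 1) x =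
      ofSeq _ (liveState (ρ i) (γ i) x)) :
    hiddenFF n (hiddenWeight ρ γ) (hiddenBias ρ γ) (i + 2) x =
      stepReLU (ofSeq (n + i + 2) (liveState (ρ (i + 1)) (γ (i + 1)) x)) := by
  rw [hiddenFF_succ, hx, hiddenWeight_mulVecE_add, layerMap_succ_liveState ρ γ hρ]
  rfl

lemma hiddenFF_succ_deadState {i q : ℕ} (hq : q ≤ i) {x : Euc n}
    (hx : hiddenFF n (hiddenWeight ρ γ) (hiddenBias ρ γ) (i + 1) x = ofSeq _ (deadState n q)) :
    hiddenFF n (hiddenWeight ρ γ) (hiddenBias ρ γ) (i + 2) x = ofSeq _ (deadState n q) := by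
  rw [hiddenFF_succ, hx, hiddenWeight_mulVecE_add, layerMap_succ_deadState ρ γ hq,
    stepReLU_ofSeq_deadState (by omega)]
  rfl

lemma hiddenFF_live_or_dead (hρ : ∀ q, 0 < ρ q) (i : ℕ) (x : Euc n) :
    ((∀ q ≤ i, ρ q ≤ ‖x - γ q‖) ∧
        hiddenFF n (hiddenWeight ρ γ) (hiddenBias ρ γ) (i + 1) x =
          ofSeq _ (liveState (ρ i) (γ i) x)) ∨
      ∃ q ≤ i, ‖x - γ q‖ < ρ q ∧
        hiddenFF n (hiddenWeight ρ γ) (hiddenBias ρ γ) (i + 1) x = ofSeq _ (deadState n q) := by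
  induction i with
  | zero =>
    rw [hiddenFF_one]
    rcases stepReLU_ofSeq_liveState (p := n + 1) (by omega) (hρ 0) (γ 0) x with
      ⟨hx, h⟩ | ⟨hx, h⟩
    · exact Or.inl ⟨fun q hq => by rwa [Nat.le_zero.1 hq], h⟩
    · exact Or.inr ⟨0, le_rfl, hx, h.trans (ofSeq_deadState_of_le (p := n + 1) le_rfl).symm⟩
  | succ i ih =>
    rcases ih with ⟨hfar, hlive⟩ | ⟨q, hq, hx, hdead⟩
    · rw [hiddenFF_succ_liveState (hρ i).ne' hlive]
      rcases stepReLU_ofSeq_liveState (p := n + i + 2) (by omega) (hρ (i + 1)) (γ (i + 1)) x with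
        ⟨hx, h⟩ | ⟨hx, h⟩
      · refine Or.inl ⟨fun q hq => ?_, h⟩
        rcases Nat.of_le_succ hq with hq | rfl
        exacts [hfar q hq, hx]
      · exact Or.inr
          ⟨i + 1, le_rfl, hx, h.trans (ofSeq_deadState_of_le (p := n + i + 2) le_rfl).symm⟩
    · exact Or.inr ⟨q, hq.trans i.le_succ, hx, hiddenFF_succ_deadState hq hdead⟩

end network

lemma sum_range_ite_le_sub {G : Type*} [AddCommGroup G] (y : ℕ → G) {q N : ℕ} (hq : q ≤ N) :
    ∑ t ∈ range N, (if q ≤ t then y t - y (t + 1) else 0) = y q - y N := by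
  induction N, hq using Nat.le_induction with
  | base => simp [sum_ite_of_false, sum_const_zero]
  | succ N hqN ih => rw [sum_range_succ, ih, if_pos hqN, sub_add_sub_cancel]

variable {m : ℕ}

-- On `deadState n q` the coefficients beyond coordinate `n` telescope to `y q - y N`.
def outputKernel (ρ : ℕ → ℝ) (γ : ℕ → Euc n) (A₀ : Matrix (Fin m) (Fin n) ℝ) (b₀ : Euc m)
    (y : ℕ → Euc m) (N : ℕ) (j : Fin m) (k : ℕ) : ℝ :=
  if h : k < n then 5 * ρ N / 4 * A₀ j ⟨k, h⟩
  else if k = n then 5 / 3 * (mulVecE A₀ (γ N) + b₀ - y N) j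
  else y (k - n - 1) j - y (k - n) j

section output
variable (ρ : ℕ → ℝ) (γ : ℕ → Euc n) (A₀ : Matrix (Fin m) (Fin n) ℝ) (b₀ : Euc m) (y : ℕ → Euc m)
  (N : ℕ)

lemma outputKernel_liveState (hρ : ρ N ≠ 0) (x : Euc n) (j : Fin m) :
    ∑ k ∈ range (n + (N + 1)), outputKernel ρ γ A₀ b₀ y N j k * liveState (ρ N) (γ N) x k =
      (mulVecE A₀ x - mulVecE A₀ (γ N) + (mulVecE A₀ (γ N) + b₀ - y N)) j := by
  rw [sum_range_add, sum_range_succ', ← Fin.sum_univ_eq_sum_range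
    (fun k => outputKernel ρ γ A₀ b₀ y N j k * liveState (ρ N) (γ N) x k)]
  simp only [outputKernel, Fin.is_lt, ↓reduceDIte, Fin.eta, liveState, ↓reduceIte, toSeq,
    PiLp.sub_apply, mul_sub, add_lt_iff_neg_left, not_lt_zero, Nat.add_eq_left, Nat.add_eq_zero_iff,
    one_ne_zero, and_false, add_tsub_cancel_left, add_tsub_cancel_right, mul_zero, sum_const_zero,
    add_zero, lt_self_iff_false, mulVecE, PiLp.add_apply, zero_add, ← sum_sub_distrib]
  congr 1
  · exact sum_congr rfl fun k _ => by field_simp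
  · ring

lemma outputKernel_deadState {q : ℕ} (hq : q ≤ N) (j : Fin m) :
    ∑ k ∈ range (n + (N + 1)), outputKernel ρ γ A₀ b₀ y N j k * deadState n q k =
      (y q - y N) j := by
  rw [sum_range_add, sum_range_succ', sum_eq_zero fun k hk => ?_]
  · simp only [outputKernel, add_lt_iff_neg_left, not_lt_zero, ↓reduceDIte, Nat.add_eq_left,
      Nat.add_eq_zero_iff, one_ne_zero, and_false, ↓reduceIte, add_tsub_cancel_left,
      add_tsub_cancel_right, deadState, add_lt_add_iff_left, Order.lt_add_one_iff, mul_ite, mul_one,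
      mul_zero, add_zero, lt_self_iff_false, PiLp.sub_apply, PiLp.add_apply, zero_add]
    exact sum_range_ite_le_sub (fun t => (y t).ofLp j) hq
  · simp [deadState, show ¬ n + q < k by simp at hk; omega]

def outputWeight : Matrix (Fin m) (Fin (n + (N + 1))) ℝ :=
  ofKernel _ (outputKernel ρ γ A₀ b₀ y N)

lemma outputWeight_liveState (hρ : ρ N ≠ 0) (x : Euc n) :
    mulVecE (outputWeight ρ γ A₀ b₀ y N) (ofSeq _ (liveState (ρ N) (γ N) x)) + y N =
      mulVecE A₀ x + b₀ := by
  ext j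
  rw [outputWeight, mulVecE_ofKernel, PiLp.add_apply, PiLp.toLp_apply,
    outputKernel_liveState ρ γ A₀ b₀ y N hρ x j]
  simp only [PiLp.add_apply, PiLp.sub_apply]
  ring

lemma outputWeight_deadState {q : ℕ} (hq : q ≤ N) :
    mulVecE (outputWeight ρ γ A₀ b₀ y N) (ofSeq _ (deadState n q)) + y N = y q := by
  ext j
  rw [outputWeight, mulVecE_ofKernel, PiLp.add_apply, PiLp.toLp_apply,
    outputKernel_deadState ρ γ A₀ b₀ y N hq j, PiLp.sub_apply, sub_add_cancel]

lemma network_live_or_dead (hρ : ∀ q, 0 < ρ q) (x : Euc n) :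
    ((∀ q ≤ N, ρ q ≤ ‖x - γ q‖) ∧
        mulVecE (outputWeight ρ γ A₀ b₀ y N)
          (hiddenFF n (hiddenWeight ρ γ) (hiddenBias ρ γ) (N + 1) x) + y N = mulVecE A₀ x + b₀) ∨
      ∃ q ≤ N, ‖x - γ q‖ < ρ q ∧
        mulVecE (outputWeight ρ γ A₀ b₀ y N)
          (hiddenFF n (hiddenWeight ρ γ) (hiddenBias ρ γ) (N + 1) x) + y N = y q := by
  rcases hiddenFF_live_or_dead hρ N x with ⟨hfar, h⟩ | ⟨q, hq, hx, h⟩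
  · exact Or.inl ⟨hfar, by rw [h, outputWeight_liveState ρ γ A₀ b₀ y N (hρ N).ne']⟩
  · exact Or.inr ⟨q, hq, hx, by rw [h, outputWeight_deadState ρ γ A₀ b₀ y N hq]⟩

end output

theorem exists_stepReLU_network {N : ℕ} (hN : 0 < N) (γ : Fin N → Euc n) (ρ : Fin N → ℝ)
    (hρ : ∀ q, 0 < ρ q) (A₀ : Matrix (Fin m) (Fin n) ℝ) (b₀ : Euc m) (y : Fin N → Euc m) :
    ∃ (W : ∀ i : ℕ, Matrix (Fin (n + i + 1)) (Fin (n + i)) ℝ) (b : ∀ i : ℕ, Euc (n + i + 1))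
      (A : Matrix (Fin m) (Fin (n + N)) ℝ) (c : Euc m), ∀ x,
        ((∀ q, x ∉ ball (γ q) (ρ q)) ∧ mulVecE A (hiddenFF n W b N x) + c = mulVecE A₀ x + b₀) ∨
          ∃ q, x ∈ ball (γ q) (ρ q) ∧ mulVecE A (hiddenFF n W b N x) + c = y q := by
  obtain ⟨N, rfl⟩ := Nat.exists_eq_add_one.2 hN
  let idx : ℕ → Fin (N + 1) := Fin.ofNat (N + 1)
  refine ⟨hiddenWeight (ρ ∘ idx) (γ ∘ idx), hiddenBias (ρ ∘ idx) (γ ∘ idx),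
    outputWeight (ρ ∘ idx) (γ ∘ idx) A₀ b₀ (y ∘ idx) N, y (idx N), fun x => ?_⟩
  simp only [mem_ball, dist_eq_norm, not_lt]
  rcases network_live_or_dead (ρ ∘ idx) (γ ∘ idx) A₀ b₀ (y ∘ idx) N (fun q => hρ (idx q)) x with
    ⟨hfar, h⟩ | ⟨q, -, hx, h⟩
  · refine Or.inl ⟨fun q => ?_, h⟩
    simpa [idx, Fin.ofNat_val_eq_self] using hfar q (Nat.le_of_lt_succ q.2)
  · exact Or.inr ⟨idx q, hx, h⟩

end

lemma exists_ball_subset_ball_inter_closedBall {E : Type*} [NormedAddCommGroup E]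
    [NormedSpace ℝ E] {c : E} {r R : ℝ} (hR : 0 < R) (hc : c ∈ closedBall 0 R) (hr : 0 < r) :
    ∃ γ ρ, 0 < ρ ∧ ball γ ρ ⊆ ball c r ∩ closedBall 0 R ∧
      ball c r ∩ closedBall 0 (R - 2 * r) ⊆ ball γ ρ := by
  by_cases hin : ball c r ⊆ closedBall 0 R
  · exact ⟨c, r, hr, subset_inter subset_rfl hin, inter_subset_left⟩
  obtain ⟨w, hwc, hwR⟩ := not_subset.1 hin
  obtain ⟨z, hzR, hzc⟩ :=
    Metric.mem_closure_iff.1 ((closure_ball (0 : E) hR.ne').symm ▸ hc) r hr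
  obtain ⟨ρ, hρ, hball⟩ := Metric.isOpen_iff.1 (isOpen_ball.inter isOpen_ball) z
    ⟨mem_ball'.2 hzc, hzR⟩
  refine ⟨z, ρ, hρ, hball.trans (inter_subset_inter_right _ ball_subset_closedBall), ?_⟩
  rintro x ⟨hxc, hxR⟩
  rw [mem_ball, dist_eq_norm] at hwc hxc
  rw [mem_closedBall_zero_iff] at hwR hxR
  have := norm_sub_norm_le w x
  have := norm_sub_le (w - c) (x - c)
  simp only [sub_sub_sub_cancel_right] at this
  linarith

section cover
variable {n m : ℕ} {f : Euc n → Euc m} {K : Set (Euc n)} {ε : ℝ}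

lemma exists_isCoverSize (hf : Continuous f) (hK : IsCompact K) (hε : 0 < ε) :
    ∃ N, IsCoverSize f K ε N := by
  have hδ : ∀ x, ∃ δ ∈ Ioo (0 : ℝ) 1, ∀ a, dist a x < δ → dist (f a) (f x) < ε := fun x => by
    obtain ⟨δ, hδ, h⟩ := Metric.continuous_iff.1 hf x ε hε
    exact ⟨min δ (1 / 2), ⟨by positivity, by norm_num⟩,
      fun a ha => h a (ha.trans_le (min_le_left _ _))⟩
  choose δ hδ hcont using hδ
  obtain ⟨t, htK, hcover⟩ := hK.elim_nhds_subcover (fun x => ball x (δ x))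
    fun x _ => ball_mem_nhds x (hδ x).1
  let c : Fin t.card → Euc n := fun i => t.equivFin.symm i
  refine ⟨t.card, c, fun i => δ (c i), fun i => htK _ (t.equivFin.symm i).2, fun i => hδ _,
    fun x hx => ?_, ?_⟩
  · obtain ⟨z, hz, hxz⟩ := mem_iUnion₂.1 (hcover hx)
    exact mem_iUnion.2 ⟨t.equivFin ⟨z, hz⟩, by simpa [c] using hxz⟩
  · rintro i _ ⟨a, ⟨ha, -⟩, rfl⟩
    exact hcont _ a ha

lemma IsCoverSize.pos {N : ℕ} (h : IsCoverSize f K ε N) (hK : K.Nonempty) : 0 < N := by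
  obtain ⟨c, r, -, -, hcover, -⟩ := h
  obtain ⟨i, -⟩ := mem_iUnion.1 (hcover hK.some_mem)
  exact Fin.pos i

lemma isCoverSize_coverNum (hf : Continuous f) (hK : IsCompact K) (hε : 0 < ε) :
    IsCoverSize f K ε (coverNum f K ε) :=
  Nat.sInf_mem (exists_isCoverSize hf hK hε)

end cover

/-- Let f : ℝⁿ → ℝᵐ be asymptotically affine.  For every ε > 0 there
exist a compact K ⊂ ℝⁿ, a positive integer N = N(f, K, ε), and a radial neural network
with N hidden layers of widths (n+1, …, n+N), Step-ReLU activations at all hidden layers,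
and a final affine layer into ℝᵐ, whose feedforward function F satisfies
‖F x − f x‖ < ε for all x ∈ ℝⁿ. -/
theorem universal_approximation_asymp_affine {n m : ℕ}
    (f : Euc n → Euc m) (hf : IsAsymptoticallyAffine f) (ε : ℝ) (hε : 0 < ε) :
    ∃ K : Set (Euc n), IsCompact K ∧
      ∃ N : ℕ, 0 < N ∧ N = coverNum f K ε ∧
        ∃ (W : ∀ i : ℕ, Matrix (Fin (n + i + 1)) (Fin (n + i)) ℝ)
          (b : ∀ i : ℕ, Euc (n + i + 1))
          (A : Matrix (Fin m) (Fin (n + N)) ℝ) (c : Euc m),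
          ∀ x : Euc n, ‖(mulVecE A (hiddenFF n W b N x) + c) - f x‖ < ε := by
  obtain ⟨hfc, A₀, b₀, hL⟩ := hf
  obtain ⟨K₁, hK₁, hfar⟩ := hL ε hε
  obtain ⟨R, hR, hK₁R⟩ : ∃ R, 2 < R ∧ K₁ ⊆ closedBall 0 (R - 2) := by
    obtain ⟨R₀, hR₀⟩ := hK₁.isBounded.subset_closedBall (0 : Euc n)
    exact ⟨max R₀ 0 + 3, by linarith [le_max_right R₀ 0],
      hR₀.trans (closedBall_subset_closedBall (by linarith [le_max_left R₀ 0]))⟩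
  have hK : IsCompact (closedBall (0 : Euc n) R) := isCompact_closedBall 0 R
  have hcover := isCoverSize_coverNum hfc hK hε
  have hpos := hcover.pos ⟨0, mem_closedBall_self (by linarith)⟩
  obtain ⟨c, r, hcK, hr, hKc, himage⟩ := hcover
  choose γ ρ hρ hsub hmem using fun i =>
    exists_ball_subset_ball_inter_closedBall (by linarith) (hcK i) (hr i).1
  obtain ⟨W, b, A, d, hF⟩ := exists_stepReLU_network hpos γ ρ hρ A₀ b₀ (f ∘ c)
  refine ⟨_, hK, _, hpos, rfl, W, b, A, d, fun x => ?_⟩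
  rcases hF x with ⟨hx, hFx⟩ | ⟨q, hx, hFx⟩
  · rw [hFx]
    refine hfar x fun hxK₁ => ?_
    have hxR : x ∈ closedBall 0 (R - 2) := hK₁R hxK₁
    obtain ⟨q, hxq⟩ := mem_iUnion.1 (hKc (closedBall_subset_closedBall (by linarith) hxR))
    exact hx q (hmem q ⟨hxq, closedBall_subset_closedBall (by linarith [(hr q).2]) hxR⟩)
  · rw [hFx, ← dist_eq_norm, dist_comm]
    exact himage q (mem_image_of_mem f (hsub q hx))
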